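/- arXiv:1112.2411 — 5 statements merged into one kernel-verified Lean document; each statement's English description precedes it below -/
import Mathlib

section
/- For all real numbers 0 < p < q there is a constant C(p,q) < ∞ such that |||x|||_{f^q} ≤ C(p,q)·‖x‖_{f^p} for all x ∈ c₀₀. -/
/-- `f(x) = log₂(x+1)`; note `flog 0 = 0`. -/
noncomputable def flog (x : ℝ) : ℝ := Real.logb 2 (x + 1)

/-- The `n`-th largest value (1-indexed) of the sequence `(|x i|)`, i.e. the decreasing
rearrangement of `(|x i|)`. -/
noncomputable def drear (x : ℕ →₀ ℝ) (n : ℕ) : ℝ :=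
  sSup {t : ℝ | 0 ≤ t ∧ n ≤ (x.support.filter fun i => t ≤ |x i|).card}

/-- The norm `‖x‖_g = sup_{n₁ < … < n_l} (1/g(l)) ∑ |x_{n_i}|`. -/
noncomputable def gnorm (g : ℕ → ℝ) (x : ℕ →₀ ℝ) : ℝ :=
  sSup {r : ℝ | ∃ s : Finset ℕ, s.Nonempty ∧ r = (1 / g s.card) * ∑ i ∈ s, |x i|}

/-- The norm `|||x|||_g = ∑_{i ≥ 1} x_i^# / g(i)`. -/
noncomputable def tnorm (g : ℕ → ℝ) (x : ℕ →₀ ℝ) : ℝ :=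
  ∑ i ∈ Finset.range x.support.card, drear x (i + 1) / g (i + 1)

/-!
Let `a` list the values `|x i|` in decreasing order and `N = ‖x‖_{f^p}`, so that every partial
sum satisfies `a₁ + ⋯ + a_l ≤ f(l)^p N`. Abel summation against the decreasing weights
`f(i)^{-q}` bounds `|||x|||_{f^q}` by `N` times
`f(n)^{p-q} + ∑ (f(i)^{-q} - f(i+1)^{-q}) f(i)^p`, and Bernoulli's inequality gives
`(s^{-q} - t^{-q}) s^p ≤ q/(q-p) (s^{p-q} - t^{p-q})` for `0 < s ≤ t`, so the sum telescopes
to at most `q/(q-p)`. Hence `C = 1 + q/(q-p)` works.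
-/
open Finset Real

lemma rpow_neg_sub_rpow_neg_mul_rpow_le {p q a b : ℝ} (hp : 0 ≤ p) (hpq : p < q) (ha : 0 < a)
    (hab : a ≤ b) :
    (a ^ (-q) - b ^ (-q)) * a ^ p ≤ q / (q - p) * (a ^ (-(q - p)) - b ^ (-(q - p))) := by
  have hb : 0 < b := ha.trans_le hab
  have hε : 0 < q - p := sub_pos.mpr hpq
  set v := (a / b) ^ (q - p) with hv
  have hv1 : v ≤ 1 := rpow_le_one (by positivity) ((div_le_one hb).mpr hab) hε.le
  -- Bernoulli's inequality for the exponent `q / (q - p) ≥ 1`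
  have bernoulli : 1 + q / (q - p) * (v - 1) ≤ (a / b) ^ q := by
    have h := one_add_mul_self_le_rpow_one_add (s := v - 1) (by linarith [show 0 ≤ v by positivity])
      ((one_le_div hε).mpr (by linarith : q - p ≤ q))
    rwa [add_sub_cancel, hv, ← rpow_mul (by positivity), mul_div_cancel₀ _ hε.ne'] at h
  have hb_mul : b ^ (-q) * a ^ p = a ^ (-(q - p)) * (a / b) ^ q := by
    rw [div_rpow ha.le hb.le, rpow_neg hb.le, rpow_neg ha.le, rpow_sub ha]
    field_simp
  have hb_pow : b ^ (-(q - p)) = a ^ (-(q - p)) * v := by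
    rw [hv, div_rpow ha.le hb.le, rpow_neg hb.le, rpow_neg ha.le]
    field_simp
  have ha_mul : a ^ (-q) * a ^ p = a ^ (-(q - p)) := by
    rw [← rpow_add ha]; ring_nf
  calc (a ^ (-q) - b ^ (-q)) * a ^ p = a ^ (-(q - p)) * (1 - (a / b) ^ q) := by
        rw [sub_mul, ha_mul, hb_mul]; ring
    _ ≤ a ^ (-(q - p)) * (q / (q - p) * (1 - v)) := by gcongr; linarith
    _ = q / (q - p) * (a ^ (-(q - p)) - b ^ (-(q - p))) := by rw [hb_pow]; ring

lemma sum_rpow_neg_sub_mul_rpow_le {u : ℕ → ℝ} {p q : ℝ} (hp : 0 ≤ p) (hpq : p < q)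
    (hu : Monotone u) (hu0 : 0 < u 0) (n : ℕ) :
    ∑ i ∈ range n, (u i ^ (-q) - u (i + 1) ^ (-q)) * u i ^ p ≤
      q / (q - p) * (u 0 ^ (-(q - p)) - u n ^ (-(q - p))) := by
  calc ∑ i ∈ range n, (u i ^ (-q) - u (i + 1) ^ (-q)) * u i ^ p
      ≤ ∑ i ∈ range n, q / (q - p) * (u i ^ (-(q - p)) - u (i + 1) ^ (-(q - p))) :=
        sum_le_sum fun i _ => rpow_neg_sub_rpow_neg_mul_rpow_le hp hpq
          (hu0.trans_le (hu (Nat.zero_le i))) (hu (Nat.le_succ i))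
    _ = q / (q - p) * (u 0 ^ (-(q - p)) - u n ^ (-(q - p))) := by
        rw [← mul_sum, sum_range_sub']

lemma sum_range_succ_mul_le_of_partial_sum_le {w a B : ℕ → ℝ} {n : ℕ} (hw : Antitone w)
    (hwn : 0 ≤ w n) (hB : ∀ i ≤ n, ∑ k ∈ range (i + 1), a k ≤ B i) :
    ∑ i ∈ range (n + 1), w i * a i ≤ w n * B n + ∑ i ∈ range n, (w i - w (i + 1)) * B i := by
  have abel := sum_range_by_parts w a (n + 1)
  simp only [smul_eq_mul, Nat.add_sub_cancel] at abel
  rw [abel, sub_eq_add_neg, ← sum_neg_distrib]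
  gcongr with i hi
  · exact hB n le_rfl
  · rw [← neg_mul, neg_sub]
    exact mul_le_mul_of_nonneg_left (hB i (mem_range.mp hi).le) (sub_nonneg.mpr (hw i.le_succ))

lemma sum_div_rpow_le_of_partial_sum_le {u a : ℕ → ℝ} {p q N : ℝ} (hp : 0 ≤ p) (hpq : p < q)
    (hu : Monotone u) (hu0 : 1 ≤ u 0) (hN : 0 ≤ N) {n : ℕ}
    (ha : ∀ i < n, ∑ k ∈ range (i + 1), a k ≤ u i ^ p * N) :
    ∑ i ∈ range n, a i / u i ^ q ≤ (1 + q / (q - p)) * N := by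
  have hε : 0 < q - p := sub_pos.mpr hpq
  have hC : 0 ≤ q / (q - p) := div_nonneg (hp.trans hpq.le) hε.le
  have hu1 : ∀ i, 1 ≤ u i := fun i => hu0.trans (hu (Nat.zero_le i))
  have hupos : ∀ i, 0 < u i := fun i => one_pos.trans_le (hu1 i)
  rcases n with _ | n
  · simp only [range_zero, sum_empty]
    exact mul_nonneg (by linarith) hN
  · have hw : Antitone fun i => u i ^ (-q) := fun i j hij =>
      rpow_le_rpow_of_nonpos (hupos i) (hu hij) (by linarith)
    have hlast : u n ^ (-q) * (u n ^ p * N) ≤ N := by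
      rw [← mul_assoc, ← rpow_add (hupos n)]
      exact mul_le_of_le_one_left hN (rpow_le_one_of_one_le_of_nonpos (hu1 n) (by linarith))
    have htel := sum_rpow_neg_sub_mul_rpow_le hp hpq hu (hupos 0) n
    have htel' : q / (q - p) * (u 0 ^ (-(q - p)) - u n ^ (-(q - p))) ≤ q / (q - p) := by
      refine mul_le_of_le_one_right hC ?_
      linarith [rpow_le_one_of_one_le_of_nonpos hu0 (by linarith : -(q - p) ≤ 0),
        rpow_nonneg (hupos n).le (-(q - p))]
    calc ∑ i ∈ range (n + 1), a i / u i ^ q = ∑ i ∈ range (n + 1), u i ^ (-q) * a i := by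
          refine sum_congr rfl fun i _ => ?_
          rw [rpow_neg (hupos i).le, div_eq_inv_mul]
      _ ≤ u n ^ (-q) * (u n ^ p * N) +
            ∑ i ∈ range n, (u i ^ (-q) - u (i + 1) ^ (-q)) * (u i ^ p * N) :=
          sum_range_succ_mul_le_of_partial_sum_le hw (rpow_nonneg (hupos n).le _)
            fun i hi => ha i (Nat.lt_succ_of_le hi)
      _ ≤ N + q / (q - p) * N := by
          simp only [← mul_assoc, ← sum_mul]
          exact add_le_add (by rwa [mul_assoc]) (mul_le_mul_of_nonneg_right (htel.trans htel') hN)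
      _ = (1 + q / (q - p)) * N := by ring

lemma one_le_flog_natCast {l : ℕ} (hl : 1 ≤ l) : 1 ≤ flog l := by
  rw [flog, le_logb_iff_rpow_le one_lt_two (by positivity), rpow_one]
  have : (1 : ℝ) ≤ l := by exact_mod_cast hl
  linarith

lemma monotone_flog_natCast : Monotone fun l : ℕ => flog l := fun a b hab =>
  logb_le_logb_of_le one_lt_two (by positivity) (by gcongr)

section gnorm

variable {g : ℕ → ℝ} (hg : ∀ l, 0 < l → 1 ≤ g l) (x : ℕ →₀ ℝ)
include hg

lemma gnorm_nonneg : 0 ≤ gnorm g x := by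
  refine Real.sSup_nonneg ?_
  rintro _ ⟨s, hs, rfl⟩
  have : 0 < g s.card := one_pos.trans_le (hg _ hs.card_pos)
  positivity

lemma bddAbove_gnorm_set :
    BddAbove {r : ℝ | ∃ s : Finset ℕ, s.Nonempty ∧ r = (1 / g s.card) * ∑ i ∈ s, |x i|} := by
  refine ⟨∑ i ∈ x.support, |x i|, ?_⟩
  rintro _ ⟨s, hs, rfl⟩
  have hsupp : ∑ i ∈ s, |x i| ≤ ∑ i ∈ x.support, |x i| := by
    rw [← sum_filter_ne_zero]
    refine sum_le_sum_of_subset_of_nonneg (fun i hi => ?_) fun i _ _ => abs_nonneg _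
    simpa using (mem_filter.mp hi).2
  refine (mul_le_of_le_one_left (sum_nonneg fun i _ => abs_nonneg _) ?_).trans hsupp
  exact div_le_one_of_le₀ (hg _ hs.card_pos) (zero_le_one.trans (hg _ hs.card_pos))

lemma sum_abs_le_mul_gnorm {s : Finset ℕ} (hs : s.Nonempty) :
    ∑ i ∈ s, |x i| ≤ g s.card * gnorm g x := by
  have hgs : 0 < g s.card := one_pos.trans_le (hg _ hs.card_pos)
  rw [← div_le_iff₀' hgs, div_eq_inv_mul, ← one_div]
  exact le_csSup (bddAbove_gnorm_set hg x) ⟨s, hs, rfl⟩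

end gnorm

theorem Finset.exists_equiv_fin_antitone {α β : Type*} [LinearOrder β] (s : Finset α)
    (g : α → β) : ∃ e : Fin s.card ≃ s, Antitone fun i => g (e i) := by
  let e₀ : Fin s.card ≃ s := s.equivFin.symm
  let v : Fin s.card → β := fun i => g (e₀ i)
  exact ⟨Fin.revPerm.trans ((Tuple.sort v).trans e₀), fun i j hij =>
    Tuple.monotone_sort v (Fin.rev_le_rev.mpr hij)⟩

lemma drear_succ_le_of_antitone {x : ℕ →₀ ℝ} (e : Fin x.support.card ≃ x.support)
    (he : Antitone fun i => |x (e i)|) (k : Fin x.support.card) :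
    drear x (k + 1) ≤ |x (e k)| := by
  refine Real.sSup_le (fun t ⟨_, hcard⟩ => ?_) (abs_nonneg _)
  by_contra! hlt
  have hsub : x.support.filter (fun i => t ≤ |x i|) ⊆ (Iio k).image fun j => (e j : ℕ) := by
    intro i hi
    obtain ⟨hi, hti⟩ := mem_filter.mp hi
    refine mem_image.mpr ⟨e.symm ⟨i, hi⟩, mem_Iio.mpr ?_, by simp⟩
    by_contra! hkj
    have := he hkj
    simp only [Equiv.apply_symm_apply] at this
    linarith
  have := (card_le_card hsub).trans card_image_le
  rw [Fin.card_Iio] at this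
  omega

lemma exists_drear_le_and_sum_range_eq_sum (x : ℕ →₀ ℝ) :
    ∃ a : ℕ → ℝ, (∀ k < x.support.card, drear x (k + 1) ≤ a k) ∧
      ∀ l ≤ x.support.card, ∃ s : Finset ℕ, s.card = l ∧ ∑ k ∈ range l, a k = ∑ i ∈ s, |x i| := by
  obtain ⟨e, he⟩ := x.support.exists_equiv_fin_antitone (|x ·|)
  refine ⟨fun k => if h : k < x.support.card then |x (e ⟨k, h⟩)| else 0, fun k hk => ?_,
    fun l hl => ?_⟩
  · simpa only [dif_pos hk] using drear_succ_le_of_antitone e he ⟨k, hk⟩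
  have hinj : Function.Injective fun j : Fin l => (e (Fin.castLE hl j) : ℕ) :=
    fun i j hij => Fin.castLE_injective hl (e.injective (Subtype.ext hij))
  refine ⟨univ.image fun j : Fin l => (e (Fin.castLE hl j) : ℕ), ?_, ?_⟩
  · rw [card_image_of_injective _ hinj, card_univ, Fintype.card_fin]
  · rw [sum_image fun i _ j _ hij => hinj hij, ← Fin.sum_univ_eq_sum_range]
    exact sum_congr rfl fun j _ => dif_pos (j.2.trans_le hl)

theorem exists_bound_tnorm_le_gnorm (p q : ℝ) (hp : 0 < p) (hpq : p < q) :
    ∃ C : ℝ, ∀ x : ℕ →₀ ℝ,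
      tnorm (fun l => flog l ^ q) x ≤ C * gnorm (fun l => flog l ^ p) x := by
  have one_le_flog_rpow : ∀ r : ℝ, 0 ≤ r → ∀ l : ℕ, 0 < l → 1 ≤ flog l ^ r := fun r hr l hl =>
    one_le_rpow (one_le_flog_natCast hl) hr
  have hu : Monotone fun i : ℕ => flog ↑(i + 1) := fun i j hij =>
    monotone_flog_natCast (Nat.succ_le_succ hij)
  refine ⟨1 + q / (q - p), fun x => ?_⟩
  obtain ⟨a, hdrear, hsum⟩ := exists_drear_le_and_sum_range_eq_sum x
  have hpartial : ∀ i < x.support.card,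
      ∑ k ∈ range (i + 1), a k ≤ flog ↑(i + 1) ^ p * gnorm (fun l => flog l ^ p) x := by
    intro i hi
    obtain ⟨s, hcard, hs⟩ := hsum (i + 1) hi
    rw [hs, ← hcard]
    exact sum_abs_le_mul_gnorm (one_le_flog_rpow p hp.le) x (card_pos.mp (hcard ▸ i.succ_pos))
  calc tnorm (fun l => flog l ^ q) x
      ≤ ∑ i ∈ range x.support.card, a i / flog ↑(i + 1) ^ q :=
        sum_le_sum fun i hi => div_le_div_of_nonneg_right (hdrear i (mem_range.mp hi))
          (zero_le_one.trans (one_le_flog_rpow q (hp.le.trans hpq.le) _ i.succ_pos))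
    _ ≤ _ := sum_div_rpow_le_of_partial_sum_le hp.le hpq hu (one_le_flog_natCast le_rfl)
        (gnorm_nonneg (one_le_flog_rpow p hp.le) x) hpartial
end

section
/- For all real numbers 0 < p < q, the series Σ_{n=1}^∞ (f(n)^p − f(n−1)^p)/f(n)^q converges (with f(0)=0). -/
/-!
With `u = f^p` and `r = q/p - 1 > 0`, the `n`-th term is `(u(n+1) - u n) / u(n+1)^(r+1)`. By convexity
of `t ↦ t^(-r)`, this is at most `(u n^(-r) - u(n+1)^(-r)) / r`, a telescoping series of nonnegative
terms whose partial sums are bounded by `u 0^(-r) / r`.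
-/

open Real

theorem one_add_mul_one_sub_le_rpow_neg {t r : ℝ} (ht : 0 < t) (hr : 0 ≤ r) :
    1 + r * (1 - t) ≤ t ^ (-r) := by
  calc 1 + r * (1 - t) ≤ log t * -r + 1 := by nlinarith [log_le_sub_one_of_pos ht]
    _ ≤ exp (log t * -r) := add_one_le_exp _
    _ = t ^ (-r) := (rpow_def_of_pos ht _).symm

theorem sub_div_rpow_add_one_le {a b r : ℝ} (ha : 0 < a) (hab : a ≤ b) (hr : 0 < r) :
    (b - a) / b ^ (r + 1) ≤ (a ^ (-r) - b ^ (-r)) / r := by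
  have hb := ha.trans_le hab
  have tangent := one_add_mul_one_sub_le_rpow_neg (div_pos ha hb) hr.le
  calc (b - a) / b ^ (r + 1) = (1 - a / b) / b ^ r := by
        rw [rpow_add_one hb.ne']; field_simp
    _ ≤ ((a / b) ^ (-r) - 1) / r / b ^ r := by
        gcongr; rw [le_div_iff₀ hr]; linarith
    _ = (a ^ (-r) - b ^ (-r)) / r := by
        rw [div_rpow ha.le hb.le, rpow_neg hb.le]; field_simp

theorem Antitone.summable_sub_succ {c : ℕ → ℝ} (hc : Antitone c) (hbdd : BddBelow (Set.range c)) :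
    Summable (fun n => c n - c (n + 1)) := by
  obtain ⟨m, hm⟩ := hbdd
  refine summable_of_sum_range_le (c := c 0 - m) (fun n => sub_nonneg.2 (hc n.le_succ)) fun n => ?_
  rw [Finset.sum_range_sub']
  linarith [hm (Set.mem_range_self n)]

theorem Monotone.summable_sub_div_rpow_add_one {u : ℕ → ℝ} (hu : Monotone u) (hu0 : 0 < u 0)
    {r : ℝ} (hr : 0 < r) : Summable (fun n => (u (n + 1) - u n) / u (n + 1) ^ (r + 1)) := by
  have hpos n : 0 < u n := hu0.trans_le (hu n.zero_le)
  have hanti : Antitone (fun n => u n ^ (-r)) := fun m n hmn =>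
    rpow_le_rpow_of_nonpos (hpos m) (hu hmn) (neg_nonpos.2 hr.le)
  have hbdd : BddBelow (Set.range (fun n => u n ^ (-r))) :=
    ⟨0, Set.forall_mem_range.2 fun n => (rpow_pos_of_pos (hpos n) _).le⟩
  refine ((hanti.summable_sub_succ hbdd).div_const r).of_nonneg_of_le (fun n => ?_) fun n =>
    sub_div_rpow_add_one_le (hpos n) (hu n.le_succ) hr
  exact div_nonneg (sub_nonneg.2 (hu n.le_succ)) (rpow_pos_of_pos (hpos _) _).le

theorem Monotone.summable_sub_rpow_div_rpow {a : ℕ → ℝ} (ha : Monotone a) (ha0 : 0 < a 0)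
    {p q : ℝ} (hp : 0 < p) (hpq : p < q) :
    Summable (fun n => (a (n + 1) ^ p - a n ^ p) / a (n + 1) ^ q) := by
  have hpos n : 0 < a n := ha0.trans_le (ha n.zero_le)
  have hmono : Monotone (fun n => a n ^ p) := fun m n hmn => rpow_le_rpow (hpos m).le (ha hmn) hp.le
  convert hmono.summable_sub_div_rpow_add_one (rpow_pos_of_pos ha0 p)
    (sub_pos.2 ((one_lt_div hp).2 hpq)) using 3 with n
  rw [sub_add_cancel, ← rpow_mul (hpos _).le, mul_div_cancel₀ _ hp.ne']

theorem monotone_flog_natCast_add_one : Monotone (fun n : ℕ => flog (n + 1)) := fun m n hmn =>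
  logb_le_logb_of_le one_lt_two (by positivity) (by gcongr)

theorem summable_increments_div (p q : ℝ) (hp : 0 < p) (hpq : p < q) :
    Summable (fun n : ℕ => (flog (n + 1) ^ p - flog n ^ p) / flog (n + 1) ^ q) := by
  -- shift by one so that the sequence `flog (n + 1)` starts at `flog 1 = 1 > 0`
  rw [← summable_nat_add_iff 1]
  have := monotone_flog_natCast_add_one.summable_sub_rpow_div_rpow (by norm_num [flog]) hp hpq
  simpa only [Nat.cast_add_one] using this
end

section
/- Let 0 < p < q, let η > 0, let n_η ∈ ℕ be such that f(n)^{p−q} ≤ η for all n ≥ n_η, and set ε = η·min_{1 ≤ n ≤ n_η} f(n)^q/n. Then every x = (x_i) ∈ c₀₀ with |x_i| ≤ ε for all i and ‖x‖_{f^p} ≤ 1 satisfies ‖x‖_{f^q} ≤ η. -/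
lemma one_le_flog_nat (l : ℕ) (hl : 1 ≤ l) : 1 ≤ flog l := by
  unfold flog
  rw [Real.le_logb_iff_rpow_le (by norm_num) (by positivity), Real.rpow_one]
  have : (1:ℝ) ≤ (l:ℝ) := by exact_mod_cast hl
  linarith

theorem gnorm_fq_le_of_small_coords (p q : ℝ) (hp : 0 < p) (hpq : p < q)
    (η : ℝ) (hη : 0 < η) (nη : ℕ) (hnη : 1 ≤ nη)
    (hn : ∀ n : ℕ, nη ≤ n → flog n ^ (p - q) ≤ η)
    (ε : ℝ)
    (hε : ε = η * (Finset.Icc 1 nη).inf' (Finset.nonempty_Icc.mpr hnη)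
      (fun n => flog n ^ q / n)) :
    ∀ x : ℕ →₀ ℝ, (∀ i, |x i| ≤ ε) → gnorm (fun l => flog l ^ p) x ≤ 1 →
      gnorm (fun l => flog l ^ q) x ≤ η := by
  intro x hx hxp
  set C := ∑ i ∈ x.support, |x i| with hC
  have hC0 : 0 ≤ C := Finset.sum_nonneg fun i _ => abs_nonneg _
  have hsum_le : ∀ s : Finset ℕ, ∑ i ∈ s, |x i| ≤ C := by
    intro s
    calc ∑ i ∈ s, |x i| ≤ ∑ i ∈ s ∪ x.support, |x i| :=
          Finset.sum_le_sum_of_subset_of_nonneg Finset.subset_union_left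
            (fun i _ _ => abs_nonneg _)
      _ = C := (Finset.sum_subset Finset.subset_union_right (fun i _ hi => by
            simp [Finsupp.notMem_support_iff.mp hi])).symm
  have hbdd : BddAbove {r : ℝ | ∃ s : Finset ℕ, s.Nonempty ∧
      r = (1 / flog s.card ^ p) * ∑ i ∈ s, |x i|} := by
    refine ⟨C, ?_⟩
    rintro r ⟨t, ht, rfl⟩
    have hf1 : 1 ≤ flog t.card := one_le_flog_nat _ (Finset.card_pos.mpr ht)
    have hfp1 : 1 ≤ flog t.card ^ p := by
      calc (1:ℝ) = 1 ^ p := (Real.one_rpow p).symm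
        _ ≤ flog t.card ^ p := Real.rpow_le_rpow zero_le_one hf1 hp.le
    have h1 : 1 / flog t.card ^ p ≤ 1 := by
      rw [div_le_one (lt_of_lt_of_le one_pos hfp1)]; exact hfp1
    calc (1 / flog t.card ^ p) * ∑ i ∈ t, |x i| ≤ 1 * ∑ i ∈ t, |x i| :=
          mul_le_mul_of_nonneg_right h1 (Finset.sum_nonneg fun i _ => abs_nonneg _)
      _ = ∑ i ∈ t, |x i| := one_mul _
      _ ≤ C := hsum_le t
  unfold gnorm
  apply Real.sSup_le _ hη.le
  rintro r ⟨s, hs, rfl⟩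
  have hl1 : 1 ≤ s.card := Finset.card_pos.mpr hs
  have hf1 : 1 ≤ flog s.card := one_le_flog_nat _ hl1
  have hf0 : 0 < flog s.card := lt_of_lt_of_le one_pos hf1
  have hfq0 : 0 < flog s.card ^ q := Real.rpow_pos_of_pos hf0 q
  have hfp0 : 0 < flog s.card ^ p := Real.rpow_pos_of_pos hf0 p
  have hS0 : 0 ≤ ∑ i ∈ s, |x i| := Finset.sum_nonneg fun i _ => abs_nonneg _
  rcases le_or_gt nη s.card with hcase | hcase
  · -- large cardinality: use gnorm_p ≤ 1
    have hmem : (1 / flog s.card ^ p) * ∑ i ∈ s, |x i| ∈ {r : ℝ | ∃ t : Finset ℕ,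
        t.Nonempty ∧ r = (1 / flog t.card ^ p) * ∑ i ∈ t, |x i|} := ⟨s, hs, rfl⟩
    have hle1 : (1 / flog s.card ^ p) * ∑ i ∈ s, |x i| ≤ 1 :=
      le_trans (le_csSup hbdd hmem) hxp
    have hS_le : ∑ i ∈ s, |x i| ≤ flog s.card ^ p := by
      rw [one_div, inv_mul_le_iff₀ hfp0, mul_one] at hle1
      exact hle1
    calc (1 / flog s.card ^ q) * ∑ i ∈ s, |x i|
        ≤ (1 / flog s.card ^ q) * flog s.card ^ p :=
          mul_le_mul_of_nonneg_left hS_le (by positivity)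
      _ = flog s.card ^ (p - q) := by
          rw [Real.rpow_sub hf0, one_div, inv_mul_eq_div]
      _ ≤ η := hn s.card hcase
  · -- small cardinality: use coordinate bound
    have hmemIcc : s.card ∈ Finset.Icc 1 nη := Finset.mem_Icc.mpr ⟨hl1, hcase.le⟩
    have hinf : (Finset.Icc 1 nη).inf' (Finset.nonempty_Icc.mpr hnη)
        (fun n => flog n ^ q / n) ≤ flog s.card ^ q / s.card :=
      Finset.inf'_le _ hmemIcc
    have hεle : ε ≤ η * (flog s.card ^ q / s.card) := by
      rw [hε]; exact mul_le_mul_of_nonneg_left hinf hη.le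
    have hSle : ∑ i ∈ s, |x i| ≤ s.card * ε := by
      calc ∑ i ∈ s, |x i| ≤ ∑ _i ∈ s, ε := Finset.sum_le_sum (fun i _ => hx i)
        _ = s.card * ε := by rw [Finset.sum_const, nsmul_eq_mul]
    have hlne : ((s.card : ℝ)) ≠ 0 := by positivity
    have h2 : (s.card : ℝ) * ε ≤ η * flog s.card ^ q := by
      calc (s.card : ℝ) * ε ≤ (s.card : ℝ) * (η * (flog s.card ^ q / s.card)) :=
            mul_le_mul_of_nonneg_left hεle (by positivity)
        _ = η * flog s.card ^ q := by field_simp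
    calc (1 / flog s.card ^ q) * ∑ i ∈ s, |x i|
        ≤ (1 / flog s.card ^ q) * (η * flog s.card ^ q) := by
          apply mul_le_mul_of_nonneg_left (le_trans hSle h2) (by positivity)
      _ = η := by field_simp
end

section
/- For every x ∈ c₀₀ one has ‖x‖_S ≤ |||x|||_f. -/
/-- The coordinatewise restriction `E(x)` of `x` to a finite set `E`. -/
noncomputable def restrictF (E : Finset ℕ) (x : ℕ →₀ ℝ) : ℕ →₀ ℝ :=
  ∑ i ∈ E, Finsupp.single i (x i)

/-- The sup-norm `‖x‖_∞` of `x ∈ c₀₀`. -/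
noncomputable def supNorm (x : ℕ →₀ ℝ) : ℝ := sSup (Set.range fun i => |x i|)

/-- `E` is an interval of natural numbers. -/
def IsNatInterval (E : Finset ℕ) : Prop := ∃ a b : ℕ, E = Finset.Icc a b

/-- `NS` is a norm on `c₀₀` satisfying the implicit equation defining Schlumprecht's space `S`,
whose unit vector basis is moreover normalized, 1-unconditional and 1-spreading, and which gives
norm one to the vectors `(f(n)/n)·∑_{i ∈ A} e_i`, `|A| = n`. -/
structure IsSNorm (NS : (ℕ →₀ ℝ) → ℝ) : Prop where
  nonneg : ∀ x, 0 ≤ NS x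
  eq_zero : ∀ x, NS x = 0 → x = 0
  smul : ∀ (c : ℝ) (x : ℕ →₀ ℝ), NS (c • x) = |c| * NS x
  add_le : ∀ x y, NS (x + y) ≤ NS x + NS y
  implicit : ∀ x, NS x = max (supNorm x)
    (sSup {r : ℝ | ∃ l : ℕ, 2 ≤ l ∧ ∃ E : Fin l → Finset ℕ,
      (∀ i, IsNatInterval (E i)) ∧
      (∀ i j : Fin l, i < j → ∀ s ∈ E i, ∀ t ∈ E j, s < t) ∧
      r = (1 / flog l) * ∑ i, NS (restrictF (E i) x)})
  spreading : ∀ (l : ℕ) (a ε : Fin l → ℝ) (n : Fin l → ℕ), StrictMono n →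
    (∀ i, ε i = 1 ∨ ε i = -1) →
    NS (∑ i, (a i * ε i) • Finsupp.single (n i) (1 : ℝ)) =
      NS (∑ i, a i • Finsupp.single (i : ℕ) (1 : ℝ))
  const_one : ∀ n : ℕ, 1 ≤ n → ∀ A : Finset ℕ, A.card = n →
    NS ((flog n / n) • ∑ i ∈ A, Finsupp.single i (1 : ℝ)) = 1

/-! By unconditionality `‖x‖_S = ‖|x|‖_S`. List the support of `x` as `p₀, p₁, …, p_{m-1}` with
`vₖ = |x (pₖ)|` decreasing, so that `vₖ ≤ x^#_{k+1}`. Peeling off the smallest value writes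
`∑ₖ vₖ e_{pₖ}` as `v_{m-1}` times the indicator of an `m`-element set, of norm
`m / f(m) ≤ ∑_{k ≤ m} 1 / f(k)` because `f` increases, plus a vector of the same shape on `m - 1`
coordinates; induction on `m` gives `‖x‖_S ≤ ∑ₖ vₖ / f(k+1) ≤ |||x|||_f`. -/

open Finset

lemma flog_pos {x : ℝ} (hx : 0 < x) : 0 < flog x :=
  Real.logb_pos one_lt_two (by linarith)

lemma flog_le_flog {x y : ℝ} (hx : -1 < x) (hxy : x ≤ y) : flog x ≤ flog y :=
  Real.logb_le_logb_of_le one_lt_two (by linarith) (by linarith)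

lemma natCast_div_flog_le_sum (n : ℕ) :
    (n : ℝ) / flog n ≤ ∑ k ∈ range n, 1 / flog ↑(k + 1) := by
  calc (n : ℝ) / flog n = ∑ _k ∈ range n, 1 / flog n := by
        rw [sum_const, card_range, nsmul_eq_mul, mul_one_div]
    _ ≤ ∑ k ∈ range n, 1 / flog ↑(k + 1) := sum_le_sum fun k hk =>
        one_div_le_one_div_of_le (flog_pos (by positivity))
          (flog_le_flog (neg_one_lt_zero.trans_le (Nat.cast_nonneg _))
            (by exact_mod_cast mem_range.mp hk))

theorem Finset.exists_enum_antitoneOn {α β : Type*} [DecidableEq α] [Nonempty α] [LinearOrder β]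
    (s : Finset α) (g : α → β) :
    ∃ p : ℕ → α, Set.InjOn p (range #s) ∧ (range #s).image p = s ∧
      AntitoneOn (g ∘ p) (range #s) := by
  set e := s.equivFin.symm
  set σ := Tuple.sort fun j => OrderDual.toDual (g (e j))
  have hmono : Monotone _ := Tuple.monotone_sort fun j => OrderDual.toDual (g (e j))
  let p : ℕ → α := fun k => if h : k < #s then e (σ ⟨k, h⟩) else Classical.arbitrary α
  have hinj : Set.InjOn p (range #s) := by
    intro a ha b hb hab
    simp only [coe_range, Set.mem_Iio] at ha hb
    simpa [p, ha, hb] using hab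
  refine ⟨p, hinj, ?_, ?_⟩
  · refine eq_of_subset_of_card_le (fun a ha => ?_) (by rw [card_image_of_injOn hinj, card_range])
    obtain ⟨k, hk, rfl⟩ := mem_image.mp ha
    simp [p, mem_range.mp hk]
  · intro a ha b hb hab
    simp only [coe_range, Set.mem_Iio] at ha hb
    simpa [p, ha, hb] using hmono (show (⟨a, ha⟩ : Fin #s) ≤ ⟨b, hb⟩ from hab)

lemma le_drear {x : ℕ →₀ ℝ} {n : ℕ} {t : ℝ} (hn : 0 < n) (ht : 0 ≤ t)
    (hcard : n ≤ #{i ∈ x.support | t ≤ |x i|}) : t ≤ drear x n := by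
  refine le_csSup ⟨∑ i ∈ x.support, |x i|, ?_⟩ ⟨ht, hcard⟩
  rintro s ⟨-, hs⟩
  obtain ⟨i, hi⟩ := card_pos.mp (hn.trans_le hs)
  rw [mem_filter] at hi
  exact hi.2.trans (single_le_sum (fun j _ => abs_nonneg (x j)) hi.1)

lemma abs_apply_le_drear_of_antitoneOn {x : ℕ →₀ ℝ} {p : ℕ → ℕ} {m k : ℕ}
    (hinj : Set.InjOn p (range m)) (hsupp : (range m).image p ⊆ x.support)
    (hanti : AntitoneOn (fun i => |x (p i)|) (range m)) (hk : k < m) :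
    |x (p k)| ≤ drear x (k + 1) := by
  refine le_drear k.succ_pos (abs_nonneg _) ?_
  have hsub : range (k + 1) ⊆ range m := range_subset_range.mpr hk
  calc k + 1 = #((range (k + 1)).image p) := by
        rw [card_image_of_injOn (hinj.mono (by simpa using hsub)), card_range]
    _ ≤ #{i ∈ x.support | |x (p k)| ≤ |x i|} := card_le_card fun i hi => by
        obtain ⟨j, hj, rfl⟩ := mem_image.mp hi
        exact mem_filter.mpr ⟨hsupp (mem_image_of_mem p (hsub hj)),
          hanti (by simpa using hsub hj) (by simpa using hk) (mem_range_succ_iff.mp hj)⟩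

section IsSNorm

variable {NS : (ℕ →₀ ℝ) → ℝ}

lemma IsSNorm.map_zero (h : IsSNorm NS) : NS 0 = 0 := by
  simpa using h.smul 0 0

lemma IsSNorm.sum_mul_sign_smul_single (h : IsSNorm NS) (A : Finset ℕ) (a ε : ℕ → ℝ)
    (hε : ∀ i, ε i = 1 ∨ ε i = -1) :
    NS (∑ i ∈ A, (a i * ε i) • Finsupp.single i 1) = NS (∑ i ∈ A, a i • Finsupp.single i 1) := by
  set emb := A.orderEmbOfFin rfl
  have key : ∀ ε : ℕ → ℝ, (∀ i, ε i = 1 ∨ ε i = -1) →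
      NS (∑ i ∈ A, (a i * ε i) • Finsupp.single i 1) =
        NS (∑ j : Fin #A, a (emb j) • Finsupp.single (j : ℕ) 1) := by
    intro ε hε
    conv_lhs => rw [← A.map_orderEmbOfFin_univ rfl, sum_map]
    exact h.spreading _ _ _ _ emb.strictMono fun _ => hε _
  simpa using (key ε hε).trans (key 1 fun _ => Or.inl rfl).symm

lemma IsSNorm.eq_sum_abs_smul_single (h : IsSNorm NS) (x : ℕ →₀ ℝ) :
    NS x = NS (∑ i ∈ x.support, |x i| • Finsupp.single i 1) := by
  let ε : ℕ → ℝ := fun i => if x i < 0 then -1 else 1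
  have hx : ∀ i, |x i| * ε i = x i := fun i => by
    by_cases hi : x i < 0
    · simp [ε, hi, abs_of_neg hi]
    · simp [ε, hi, abs_of_nonneg (not_lt.mp hi)]
  rw [← h.sum_mul_sign_smul_single _ _ ε fun i => by by_cases hi : x i < 0 <;> simp [ε, hi]]
  simp only [hx, Finsupp.smul_single_one]
  exact congrArg NS (Finsupp.sum_single x).symm

lemma IsSNorm.sum_single_one (h : IsSNorm NS) (A : Finset ℕ) :
    NS (∑ i ∈ A, Finsupp.single i 1) = #A / flog #A := by
  rcases A.eq_empty_or_nonempty with rfl | hA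
  · simp [h.map_zero]
  have hcard : (0 : ℝ) < #A := by exact_mod_cast hA.card_pos
  have hf := flog_pos hcard
  have h1 := h.const_one #A hA.card_pos A rfl
  rw [h.smul, abs_of_pos (div_pos hf hcard)] at h1
  field_simp at h1 ⊢
  linarith

lemma IsSNorm.sum_smul_single_le (h : IsSNorm NS) (p : ℕ → ℕ) (m : ℕ) (v : ℕ → ℝ)
    (hinj : Set.InjOn p (range m)) (hnonneg : ∀ k ∈ range m, 0 ≤ v k)
    (hanti : AntitoneOn v (range m)) :
    NS (∑ k ∈ range m, v k • Finsupp.single (p k) 1) ≤ ∑ k ∈ range m, v k / flog ↑(k + 1) := by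
  induction m generalizing v with
  | zero => simp [h.map_zero]
  | succ m ih =>
    have hsub : (range m : Set ℕ) ⊆ range (m + 1) := by simp
    have hvm_le : ∀ k ∈ range m, v m ≤ v k := fun k hk =>
      hanti (by simpa using hsub hk) (by simp) (mem_range.mp hk).le
    have hdecomp : ∑ k ∈ range (m + 1), v k • Finsupp.single (p k) (1 : ℝ) =
        v m • ∑ k ∈ range (m + 1), Finsupp.single (p k) 1 +
          ∑ k ∈ range m, (v k - v m) • Finsupp.single (p k) 1 := by
      rw [sum_range_succ, sum_range_succ, smul_add, smul_sum]
      simp only [sub_smul, sum_sub_distrib]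
      abel
    have hlevel : NS (∑ k ∈ range (m + 1), Finsupp.single (p k) (1 : ℝ)) =
        ((m + 1 : ℕ) : ℝ) / flog ↑(m + 1) := by
      rw [← sum_image (f := fun i => Finsupp.single i (1 : ℝ)) hinj, h.sum_single_one,
        card_image_of_injOn hinj, card_range]
    have hrest := ih (fun k => v k - v m) (hinj.mono hsub)
      (fun k hk => sub_nonneg.mpr (hvm_le k hk))
      (fun a ha b hb hab => sub_le_sub_right (hanti (hsub ha) (hsub hb) hab) (v m))
    have hvm : 0 ≤ v m := hnonneg m (by simp)
    calc NS (∑ k ∈ range (m + 1), v k • Finsupp.single (p k) 1)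
        ≤ v m * (((m + 1 : ℕ) : ℝ) / flog ↑(m + 1)) +
            ∑ k ∈ range m, (v k - v m) / flog ↑(k + 1) := by
          rw [hdecomp]
          refine (h.add_le _ _).trans ?_
          rw [h.smul, abs_of_nonneg hvm, hlevel]
          gcongr
      _ ≤ v m * ∑ k ∈ range (m + 1), 1 / flog ↑(k + 1) +
            ∑ k ∈ range m, (v k - v m) / flog ↑(k + 1) := by
          gcongr
          exact natCast_div_flog_le_sum (m + 1)
      _ = ∑ k ∈ range (m + 1), v k / flog ↑(k + 1) := by
          simp only [sum_range_succ, mul_add, mul_sum, mul_one_div, sub_div, sum_sub_distrib]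
          ring

end IsSNorm

theorem snorm_le_tnorm_flog (NS : (ℕ →₀ ℝ) → ℝ) (hNS : IsSNorm NS) (x : ℕ →₀ ℝ) :
    NS x ≤ tnorm (fun i => flog i) x := by
  obtain ⟨p, hinj, himage, hanti⟩ := x.support.exists_enum_antitoneOn fun i => |x i|
  calc NS x = NS (∑ k ∈ range #x.support, |x (p k)| • Finsupp.single (p k) 1) := by
        rw [hNS.eq_sum_abs_smul_single]
        congr 1
        conv_lhs => rw [← himage]
        exact sum_image hinj
    _ ≤ ∑ k ∈ range #x.support, |x (p k)| / flog ↑(k + 1) :=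
        hNS.sum_smul_single_le p _ _ hinj (fun _ _ => abs_nonneg _) hanti
    _ ≤ tnorm (fun i => flog i) x := sum_le_sum fun k hk =>
        div_le_div_of_nonneg_right
          (abs_apply_le_drear_of_antitoneOn hinj himage.le hanti (mem_range.mp hk))
          (flog_pos (by positivity)).le
end

section
/- Let ‖·‖ be a norm on c₀₀ such that ‖E(x)‖ ≤ ‖x‖ for every x ∈ c₀₀ and every interval E ⊆ ℕ, where E(x) is the coordinatewise restriction of x to E, and for l ∈ ℕ set ‖x‖_l = (1/f(l))·max_{E₁<E₂<…<E_l intervals} Σ_{i=1}^l ‖E_i(x)‖. If x = (1/n)·Σ_{i=1}^n x_i, where x₁ < x₂ < … < x_n is a block sequence with ‖x_i‖ ≤ 1 for each i (i.e. x is an ℓ₁^{+n}-average), then for every l ∈ ℕ, ‖x‖_l ≤ (1/f(l))·(1 + l/n). -/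
/-- `x` is an `ℓ₁^{+n}`-average for the norm `N`: `x = (1/n) ∑_{i=1}^n x_i` for a block
sequence `x₁ < … < x_n` in the unit ball of `N`. -/
def IsL1PlusAverage (N : (ℕ →₀ ℝ) → ℝ) (n : ℕ) (x : ℕ →₀ ℝ) : Prop :=
  ∃ xs : ℕ → (ℕ →₀ ℝ),
    (∀ i ∈ Finset.Icc 1 n, N (xs i) ≤ 1 ∧ xs i ≠ 0) ∧
    (∀ i ∈ Finset.Icc 1 n, ∀ i' ∈ Finset.Icc 1 n, i < i' →
      ∀ s ∈ (xs i).support, ∀ t ∈ (xs i').support, s < t) ∧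
    x = (1 / (n : ℝ)) • ∑ i ∈ Finset.Icc 1 n, xs i

/-!
Write `x = (1/n) ∑ xⱼ` and take intervals `E₁ < ⋯ < E_l`. Then
`∑ᵢ ‖Eᵢ x‖ ≤ (1/n) ∑ᵢ ∑ⱼ ‖Eᵢ xⱼ‖`, and a term is nonzero only if `Eᵢ` meets `supp xⱼ`.
Since both families are successive, the meeting pairs `(i, j)` form a chain in the product
order, so `(i, j) ↦ i + j` is injective on them and there are at most `l + n - 1` of them.
Each such term is at most `‖xⱼ‖ ≤ 1`, which gives `∑ᵢ ‖Eᵢ x‖ ≤ (l + n - 1)/n ≤ 1 + l/n`.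
-/

open Finset

lemma flog_nonneg {x : ℝ} (hx : 0 ≤ x) : 0 ≤ flog x :=
  Real.logb_nonneg one_lt_two (by linarith)

lemma restrictF_smul (E : Finset ℕ) (c : ℝ) (x : ℕ →₀ ℝ) :
    restrictF E (c • x) = c • restrictF E x := by
  simp [restrictF, Finsupp.smul_single, Finset.smul_sum]

lemma restrictF_sum {ι : Type*} (E : Finset ℕ) (s : Finset ι) (v : ι → ℕ →₀ ℝ) :
    restrictF E (∑ j ∈ s, v j) = ∑ j ∈ s, restrictF E (v j) := by
  simp only [restrictF, Finsupp.finsetSum_apply, Finsupp.single_finsetSum]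
  exact Finset.sum_comm

lemma restrictF_eq_zero_of_disjoint {E : Finset ℕ} {x : ℕ →₀ ℝ} (h : Disjoint E x.support) :
    restrictF E x = 0 :=
  Finset.sum_eq_zero fun i hi => by
    simp [Finsupp.notMem_support_iff.mp (Finset.disjoint_left.mp h hi)]

lemma card_le_of_monotone_pairs {l n : ℕ} (T : Finset (Fin l × ℕ))
    (hT : ∀ p ∈ T, p.2 ∈ Icc 1 n) (hmono : ∀ p ∈ T, ∀ q ∈ T, p.1 < q.1 → p.2 ≤ q.2) :
    #T ≤ l + n - 1 := by
  have hinj : Set.InjOn (fun p : Fin l × ℕ => (p.1 : ℕ) + p.2) T := by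
    intro p hp q hq hsum
    simp only at hsum
    rcases lt_trichotomy p.1 q.1 with hlt | heq | hgt
    · have := hmono p hp q hq hlt
      rw [Fin.lt_def] at hlt
      omega
    · exact Prod.ext heq (by rw [heq] at hsum; omega)
    · have := hmono q hq p hp hgt
      rw [Fin.lt_def] at hgt
      omega
  calc #T ≤ #(Ico 1 (l + n)) := by
        refine card_le_card_of_injOn _ (fun p hp => ?_) hinj
        have := mem_Icc.mp (hT p hp)
        simp only [coe_Ico, Set.mem_Ico]
        omega
    _ = l + n - 1 := Nat.card_Ico 1 (l + n)

def meetingPairs {l : ℕ} (E : Fin l → Finset ℕ) (n : ℕ) (xs : ℕ → ℕ →₀ ℝ) :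
    Finset (Fin l × ℕ) :=
  {p ∈ univ ×ˢ Icc 1 n | ¬ Disjoint (E p.1) (xs p.2).support}

section Blocks

variable {l n : ℕ} {E : Fin l → Finset ℕ} {xs : ℕ → ℕ →₀ ℝ}

lemma meetingPairs_monotone (hE : ∀ i j : Fin l, i < j → ∀ s ∈ E i, ∀ t ∈ E j, s < t)
    (hxs : ∀ j ∈ Icc 1 n, ∀ j' ∈ Icc 1 n, j < j' →
      ∀ s ∈ (xs j).support, ∀ t ∈ (xs j').support, s < t) :
    ∀ p ∈ meetingPairs E n xs, ∀ q ∈ meetingPairs E n xs, p.1 < q.1 → p.2 ≤ q.2 := by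
  intro p hp q hq hlt
  simp only [meetingPairs, mem_filter, mem_product, not_disjoint_iff] at hp hq
  obtain ⟨⟨-, hpJ⟩, s, hsE, hsx⟩ := hp
  obtain ⟨⟨-, hqJ⟩, t, htE, htx⟩ := hq
  by_contra! hgt
  exact (hE _ _ hlt s hsE t htE).asymm (hxs _ hqJ _ hpJ hgt t htx s hsx)

lemma card_meetingPairs_le (hE : ∀ i j : Fin l, i < j → ∀ s ∈ E i, ∀ t ∈ E j, s < t)
    (hxs : ∀ j ∈ Icc 1 n, ∀ j' ∈ Icc 1 n, j < j' →
      ∀ s ∈ (xs j).support, ∀ t ∈ (xs j').support, s < t) :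
    #(meetingPairs E n xs) ≤ l + n - 1 :=
  card_le_of_monotone_pairs _ (fun _ hp => (mem_product.mp (mem_filter.mp hp).1).2)
    (meetingPairs_monotone hE hxs)

lemma sum_restrictF_blockSum_le (N : (ℕ →₀ ℝ) → ℝ) (hN0 : N 0 = 0)
    (hadd : ∀ x y, N (x + y) ≤ N x + N y)
    (hE : ∀ i j : Fin l, i < j → ∀ s ∈ E i, ∀ t ∈ E j, s < t)
    (hxs : ∀ j ∈ Icc 1 n, ∀ j' ∈ Icc 1 n, j < j' →
      ∀ s ∈ (xs j).support, ∀ t ∈ (xs j').support, s < t)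
    (hle : ∀ i, ∀ j ∈ Icc 1 n, N (restrictF (E i) (xs j)) ≤ 1) :
    ∑ i, N (restrictF (E i) (∑ j ∈ Icc 1 n, xs j)) ≤ ((l + n - 1 : ℕ) : ℝ) :=
  calc ∑ i, N (restrictF (E i) (∑ j ∈ Icc 1 n, xs j))
      ≤ ∑ i, ∑ j ∈ Icc 1 n, N (restrictF (E i) (xs j)) := sum_le_sum fun i _ => by
        rw [restrictF_sum]
        exact le_sum_of_subadditive N hN0.le hadd _ _
    _ = ∑ p ∈ meetingPairs E n xs, N (restrictF (E p.1) (xs p.2)) := by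
        rw [← sum_product', meetingPairs, sum_filter_of_ne]
        intro p _ hp hdisj
        rw [restrictF_eq_zero_of_disjoint hdisj, hN0] at hp
        exact hp rfl
    _ ≤ #(meetingPairs E n xs) := by
        refine (sum_le_card_nsmul _ _ 1 fun p hp => ?_).trans_eq (by simp)
        exact hle p.1 p.2 (mem_product.mp (mem_filter.mp hp).1).2
    _ ≤ ((l + n - 1 : ℕ) : ℝ) := by exact_mod_cast card_meetingPairs_le hE hxs

end Blocks

theorem norm_l_le_of_l1_plus_average_general (N : (ℕ →₀ ℝ) → ℝ)
    (hsmul : ∀ (c : ℝ) (x : ℕ →₀ ℝ), N (c • x) = |c| * N x)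
    (hadd : ∀ x y, N (x + y) ≤ N x + N y)
    (hrestrict : ∀ (x : ℕ →₀ ℝ) (E : Finset ℕ), IsNatInterval E → N (restrictF E x) ≤ N x)
    (n : ℕ) (x : ℕ →₀ ℝ) (hx : IsL1PlusAverage N n x) :
    ∀ l : ℕ, 1 ≤ l →
      sSup {r : ℝ | ∃ E : Fin l → Finset ℕ, (∀ i, IsNatInterval (E i)) ∧
        (∀ i j : Fin l, i < j → ∀ s ∈ E i, ∀ t ∈ E j, s < t) ∧
        r = (1 / flog l) * ∑ i, N (restrictF (E i) x)} ≤
      (1 / flog l) * (1 + (l : ℝ) / n) := by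
  obtain ⟨xs, hxs_ball, hxs_block, rfl⟩ := hx
  intro l _
  have hN0 : N 0 = 0 := by simpa using hsmul 0 0
  have hflog := flog_nonneg (Nat.cast_nonneg (α := ℝ) l)
  refine Real.sSup_le ?_ (by positivity)
  rintro _ ⟨E, hE_int, hE_block, rfl⟩
  have hblocks := sum_restrictF_blockSum_le N hN0 hadd hE_block hxs_block
    fun i j hj => (hrestrict _ _ (hE_int i)).trans (hxs_ball j hj).1
  have hlen : ((l + n - 1 : ℕ) : ℝ) ≤ l + n := by exact_mod_cast Nat.sub_le _ _
  gcongr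
  calc ∑ i, N (restrictF (E i) ((1 / (n : ℝ)) • ∑ j ∈ Icc 1 n, xs j))
      = 1 / n * ∑ i, N (restrictF (E i) (∑ j ∈ Icc 1 n, xs j)) := by
        simp only [restrictF_smul, hsmul, abs_of_nonneg (by positivity : (0 : ℝ) ≤ 1 / n),
          mul_sum]
    _ ≤ 1 / n * (l + n) := by gcongr; exact hblocks.trans hlen
    _ = l / n + n / n := by ring
    _ ≤ 1 + l / n := by linarith [div_self_le_one (n : ℝ)]

theorem norm_l_le_of_l1_plus_average (N : (ℕ →₀ ℝ) → ℝ)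
    (hnonneg : ∀ x, 0 ≤ N x)
    (hzero : ∀ x, N x = 0 → x = 0)
    (hsmul : ∀ (c : ℝ) (x : ℕ →₀ ℝ), N (c • x) = |c| * N x)
    (hadd : ∀ x y, N (x + y) ≤ N x + N y)
    (hrestrict : ∀ (x : ℕ →₀ ℝ) (E : Finset ℕ), IsNatInterval E → N (restrictF E x) ≤ N x)
    (n : ℕ) (hn : 1 ≤ n) (x : ℕ →₀ ℝ) (hx : IsL1PlusAverage N n x) :
    ∀ l : ℕ, 1 ≤ l →
      sSup {r : ℝ | ∃ E : Fin l → Finset ℕ, (∀ i, IsNatInterval (E i)) ∧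
        (∀ i j : Fin l, i < j → ∀ s ∈ E i, ∀ t ∈ E j, s < t) ∧
        r = (1 / flog l) * ∑ i, N (restrictF (E i) x)} ≤
      (1 / flog l) * (1 + (l : ℝ) / n) :=
  norm_l_le_of_l1_plus_average_general N hsmul hadd hrestrict n x hx
end
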